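/- With tangent vectors Z_L = [∂_L P,P] and Z_R = −[∂_R P,P] and P = 1 − XX†, X†X = 1, the inner product (Z_L, Z_R) = −(1/2)tr(Z_L Z_R) equals −(1/2) tr((∂_L X ∂_R X† + ∂_R X ∂_L X†) P), which is the off-diagonal component G_{LR} of the induced metric. -/

import Mathlib

open Matrix

attribute [local instance] Matrix.normedAddCommGroup Matrix.normedSpace

section auxdefs

variable {n₁ n₂ n₃ : Type*} [Fintype n₁] [Fintype n₂] [Fintype n₃]

noncomputable def mulCLM : Matrix n₁ n₂ ℂ →L[ℝ] Matrix n₂ n₃ ℂ →L[ℝ] Matrix n₁ n₃ ℂ :=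
  LinearMap.toContinuousLinearMap
  { toFun := fun A => LinearMap.toContinuousLinearMap
      { toFun := fun B => A * B
        map_add' := fun B C => Matrix.mul_add A B C
        map_smul' := fun r B => Matrix.mul_smul A r B }
    map_add' := fun A A' => by ext B; simp [Matrix.add_mul]
    map_smul' := fun r A => by ext B; simp [Matrix.smul_mul] }

@[simp] lemma mulCLM_apply (A : Matrix n₁ n₂ ℂ) (B : Matrix n₂ n₃ ℂ) :
    (mulCLM A B : Matrix n₁ n₃ ℂ) = A * B := rfl

noncomputable def ctCLM : Matrix n₁ n₂ ℂ →L[ℝ] Matrix n₂ n₁ ℂ :=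
  LinearMap.toContinuousLinearMap
  { toFun := fun A => Aᴴ
    map_add' := fun A B => conjTranspose_add A B
    map_smul' := fun r A => by
      ext i j
      simp [conjTranspose_apply, Matrix.smul_apply, star_smul] }

@[simp] lemma ctCLM_apply (A : Matrix n₁ n₂ ℂ) : (ctCLM A : Matrix n₂ n₁ ℂ) = Aᴴ := rfl

variable {E : Type*} [NormedAddCommGroup E] [NormedSpace ℝ E]

lemma fderiv_matrix_mul {f : E → Matrix n₁ n₂ ℂ} {g : E → Matrix n₂ n₃ ℂ} {x : E}
    (hf : DifferentiableAt ℝ f x) (hg : DifferentiableAt ℝ g x) (v : E) :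
    fderiv ℝ (fun y => f y * g y) x v
      = fderiv ℝ f x v * g x + f x * fderiv ℝ g x v := by
  have h := (mulCLM (n₁ := n₁) (n₂ := n₂) (n₃ := n₃)).hasFDerivAt_of_bilinear
    hf.hasFDerivAt hg.hasFDerivAt
  have h2 : fderiv ℝ (fun y => f y * g y) x = _ := h.fderiv
  rw [h2]
  simp [ContinuousLinearMap.precompR, ContinuousLinearMap.precompL, add_comm]
  rfl

lemma fderiv_matrix_ct {f : E → Matrix n₁ n₂ ℂ} {x : E}
    (hf : DifferentiableAt ℝ f x) (v : E) :
    fderiv ℝ (fun y => (f y)ᴴ) x v = (fderiv ℝ f x v)ᴴ := by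
  have h := ((ctCLM (n₁ := n₁) (n₂ := n₂)).hasFDerivAt.comp x hf.hasFDerivAt).fderiv
  have : (fun y => (f y)ᴴ) = ctCLM ∘ f := rfl
  rw [this]
  exact (congrArg (fun L => L v) h).trans rfl

lemma differentiable_matrix_ct {f : E → Matrix n₁ n₂ ℂ} (hf : Differentiable ℝ f) :
    Differentiable ℝ (fun y => (f y)ᴴ) :=
  fun x => ((ctCLM (n₁ := n₁) (n₂ := n₂)).differentiable.comp hf) x

lemma differentiable_matrix_mul {f : E → Matrix n₁ n₂ ℂ} {g : E → Matrix n₂ n₃ ℂ}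
    (hf : Differentiable ℝ f) (hg : Differentiable ℝ g) :
    Differentiable ℝ (fun y => f y * g y) := fun x => by
  have h := (mulCLM (n₁ := n₁) (n₂ := n₂) (n₃ := n₃)).hasFDerivAt_of_bilinear
    (hf x).hasFDerivAt (hg x).hasFDerivAt
  exact h.differentiableAt

end auxdefs

noncomputable def pL {α : Type*} [NormedAddCommGroup α] [NormedSpace ℝ α]
    (f : ℝ × ℝ → α) : ℝ × ℝ → α := fun x => fderiv ℝ f x (1, 0)

noncomputable def pR {α : Type*} [NormedAddCommGroup α] [NormedSpace ℝ α]
    (f : ℝ × ℝ → α) : ℝ × ℝ → α := fun x => fderiv ℝ f x (0, 1)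

theorem stmt13 {N m : ℕ} (X : ℝ × ℝ → Matrix (Fin N) (Fin m) ℂ)
    (hsmooth : ContDiff ℝ (⊤ : ℕ∞) X)
    (hX : ∀ x, (X x)ᴴ * X x = 1)
    (P : ℝ × ℝ → Matrix (Fin N) (Fin N) ℂ)
    (hP : ∀ x, P x = 1 - X x * (X x)ᴴ) :
    ∀ x,
      -(1 / 2 : ℂ) * Matrix.trace ((pL P x * P x - P x * pL P x) *
          (-(pR P x * P x - P x * pR P x)))
        = -(1 / 2 : ℂ) *
            Matrix.trace ((pL X x * (pR X x)ᴴ + pR X x * (pL X x)ᴴ) * P x) := by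
  intro x
  have hd : Differentiable ℝ X := hsmooth.differentiable (by simp)
  have hdct : Differentiable ℝ fun y => (X y)ᴴ := differentiable_matrix_ct hd
  have hdmul : Differentiable ℝ fun y => X y * (X y)ᴴ := differentiable_matrix_mul hd hdct
  have hPfun : P = fun y => 1 - X y * (X y)ᴴ := funext hP
  set Y := X x with hYdef
  set ξ := pL X x with hxidef
  set η := pR X x with hetadef
  set Q := P x with hQdef2
  have hYY : Yᴴ * Y = 1 := hX x
  have hQdef : Q = 1 - Y * Yᴴ := hP x
  have hYQ : Yᴴ * Q = 0 := by
    rw [hQdef, Matrix.mul_sub, Matrix.mul_one, ← Matrix.mul_assoc, hYY, Matrix.one_mul,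
      sub_self]
  have hQY : Q * Y = 0 := by
    rw [hQdef, Matrix.sub_mul, Matrix.one_mul, Matrix.mul_assoc, hYY, Matrix.mul_one,
      sub_self]
  have hWW : (Y * Yᴴ) * (Y * Yᴴ) = Y * Yᴴ := by
    rw [Matrix.mul_assoc, ← Matrix.mul_assoc Yᴴ, hYY, Matrix.one_mul]
  have hQQ : Q * Q = Q := by
    rw [hQdef, Matrix.mul_sub, Matrix.mul_one, Matrix.sub_mul, Matrix.one_mul, hWW,
      sub_self, sub_zero]
  -- derivative formulas
  have hderiv : ∀ v : ℝ × ℝ, fderiv ℝ P x v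
      = -(fderiv ℝ X x v * Yᴴ + Y * (fderiv ℝ X x v)ᴴ) := by
    intro v
    rw [hPfun]
    have h1 : fderiv ℝ (fun y => (1 : Matrix (Fin N) (Fin N) ℂ) - X y * (X y)ᴴ) x v
        = -(fderiv ℝ (fun y => X y * (X y)ᴴ) x v) := by
      erw [fderiv_const_sub]
      rfl
    rw [h1,
      fderiv_matrix_mul (hd x) (hdct x) v, fderiv_matrix_ct (hd x) v]
  have hpLP : pL P x = -(ξ * Yᴴ + Y * ξᴴ) := hderiv (1, 0)
  have hpRP : pR P x = -(η * Yᴴ + Y * ηᴴ) := hderiv (0, 1)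
  -- algebra
  have hAQ : pL P x * Q = -(Y * (ξᴴ * Q)) := by
    rw [hpLP]
    simp [Matrix.add_mul, Matrix.mul_assoc, hYQ]
  have hQA : Q * pL P x = -(Q * (ξ * Yᴴ)) := by
    rw [hpLP]
    simp [Matrix.mul_add, ← Matrix.mul_assoc, hQY]
  have hBQ : pR P x * Q = -(Y * (ηᴴ * Q)) := by
    rw [hpRP]
    simp [Matrix.add_mul, Matrix.mul_assoc, hYQ]
  have hQB : Q * pR P x = -(Q * (η * Yᴴ)) := by
    rw [hpRP]
    simp [Matrix.mul_add, ← Matrix.mul_assoc, hQY]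
  have expand : (pL P x * Q - Q * pL P x) * (-(pR P x * Q - Q * pR P x))
      = (Q * (ξ * Yᴴ)) * (Y * (ηᴴ * Q)) - (Q * (ξ * Yᴴ)) * (Q * (η * Yᴴ))
        - (Y * (ξᴴ * Q)) * (Y * (ηᴴ * Q)) + (Y * (ξᴴ * Q)) * (Q * (η * Yᴴ)) := by
    rw [hAQ, hQA, hBQ, hQB]
    noncomm_ring
  have m1 : (Q * (ξ * Yᴴ)) * (Y * (ηᴴ * Q)) = Q * (ξ * (ηᴴ * Q)) := by
    simp only [Matrix.mul_assoc]
    rw [← Matrix.mul_assoc Yᴴ Y, hYY, Matrix.one_mul]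
  have m2 : (Q * (ξ * Yᴴ)) * (Q * (η * Yᴴ)) = 0 := by
    simp only [Matrix.mul_assoc]
    rw [← Matrix.mul_assoc Yᴴ Q, hYQ, Matrix.zero_mul, Matrix.mul_zero, Matrix.mul_zero]
  have m3 : (Y * (ξᴴ * Q)) * (Y * (ηᴴ * Q)) = 0 := by
    simp only [Matrix.mul_assoc]
    rw [← Matrix.mul_assoc Q Y, hQY, Matrix.zero_mul, Matrix.mul_zero, Matrix.mul_zero]
  have m4 : (Y * (ξᴴ * Q)) * (Q * (η * Yᴴ)) = Y * (ξᴴ * (Q * (η * Yᴴ))) := by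
    simp only [Matrix.mul_assoc]
    rw [← Matrix.mul_assoc Q Q, hQQ]
  have t1 : Matrix.trace (Q * (ξ * (ηᴴ * Q))) = Matrix.trace (ξ * (ηᴴ * Q)) := by
    rw [Matrix.trace_mul_comm]
    simp only [Matrix.mul_assoc]
    rw [hQQ]
  have t2 : Matrix.trace (Y * (ξᴴ * (Q * (η * Yᴴ)))) = Matrix.trace (η * (ξᴴ * Q)) := by
    rw [Matrix.trace_mul_comm]
    simp only [Matrix.mul_assoc]
    rw [hYY, Matrix.mul_one, Matrix.trace_mul_comm, Matrix.mul_assoc,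
      Matrix.trace_mul_comm, Matrix.mul_assoc]
  congr 1
  rw [expand, m1, m2, m3, m4, sub_zero, sub_zero, Matrix.trace_add, t1, t2,
    Matrix.add_mul, Matrix.trace_add, Matrix.mul_assoc, Matrix.mul_assoc]
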